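/- arXiv:1109.5790 — 2 statements merged into one kernel-verified Lean document; each statement's English description precedes it below -/
import Mathlib

section
/- Decodability at the relays: let V₁, V₂ ∈ ℂ^{3×2} be fixed matrices such that any two rows of V₁ form an invertible 2×2 matrix and likewise for V₂, and let the first-hop channel coefficients H_{ij}(t), i,j ∈ {1,2}, t ∈ {1,2,3}, be i.i.d. standard complex Gaussians. Define Y₁(t) = H₁₁(t)·V₁ₜ·u + H₁₂(t)·V₂ₜ·v for t = 1,2,3 and Y₂(3) = H₂₁(3)·V₁₃·u + H₂₂(3)·V₂₃·v, where V_{iₜ} denotes row t of V_i and u, v ∈ ℂ² are unknown. Then with probability 1, the 4×4 matrix sending (u, v) to (Y₁(1), Y₁(2), Y₁(3), Y₂(3)) is invertible, so relay 1 can recover u and v. -/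
/-!
After factoring out the row-pair minors of `V₁` and `V₂`, the determinant is the product
`(H₁₁(3) H₂₂(3) - H₁₂(3) H₂₁(3)) * (c₁ H₁₁(2) H₁₂(1) - c₂ H₁₁(1) H₁₂(2))` with `c₁ c₂ ≠ 0`.
Each factor vanishes only if one coefficient equals a function of three others that are
independent of it; since the law of that coefficient has no atoms, this has probability zero.
-/

open MeasureTheory ProbabilityTheory

theorem MeasureTheory.Measure.AbsolutelyContinuous.nullSingletonClass {α : Type*}
    [MeasurableSpace α] {μ ν : Measure α} (h : μ ≪ ν) [NullSingletonClass ν] :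
    NullSingletonClass μ :=
  ⟨fun x => h (measure_singleton x)⟩

section Independence

variable {Ω α β : Type*} [MeasurableSpace Ω] [MeasurableSpace α] [MeasurableSpace β]
  {μ : Measure Ω} {W : Ω → α} {Z : Ω → β}

theorem ProbabilityTheory.iIndepFun.indepFun_triple {ι : Type*} {X : ι → Ω → β}
    (hX : iIndepFun X μ) (hmeas : ∀ k, Measurable (X k)) {i j l k : ι}
    (hik : i ≠ k) (hjk : j ≠ k) (hlk : l ≠ k) :
    IndepFun (fun ω => (X i ω, X j ω, X l ω)) (X k) μ := by
  classical
  have hdisj : Disjoint ({i, j, l} : Finset ι) {k} := by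
    simp [Finset.disjoint_singleton_right, hik.symm, hjk.symm, hlk.symm]
  exact (hX.indepFun_finset {i, j, l} {k} hdisj hmeas).comp
    (φ := fun v : ({i, j, l} : Finset ι) → β =>
      (v ⟨i, by simp⟩, v ⟨j, by simp⟩, v ⟨l, by simp⟩))
    (ψ := fun v : ({k} : Finset ι) → β => v ⟨k, by simp⟩) (by fun_prop) (by fun_prop)

theorem ProbabilityTheory.IndepFun.measure_eq_comp_eq_zero [IsFiniteMeasure μ] [MeasurableEq β]
    (hind : IndepFun W Z μ) (hW : Measurable W) (hZ : Measurable Z)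
    [NullSingletonClass (μ.map Z)] {φ : α → β} (hφ : Measurable φ) :
    μ {ω | Z ω = φ (W ω)} = 0 := by
  have hs : MeasurableSet {p : α × β | p.2 = φ p.1} :=
    measurableSet_eq_fun measurable_snd (hφ.comp measurable_fst)
  have hmap : μ.map (fun ω => (W ω, Z ω)) = (μ.map W).prod (μ.map Z) :=
    (indepFun_iff_map_prod_eq_prod_map_map hW.aemeasurable hZ.aemeasurable).mp hind
  have hevent : μ {ω | Z ω = φ (W ω)} = (μ.map (fun ω => (W ω, Z ω))) {p | p.2 = φ p.1} := by
    rw [Measure.map_apply (hW.prodMk hZ) hs]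
    rfl
  rw [hevent, hmap, Measure.measure_prod_null hs]
  exact Filter.Eventually.of_forall fun w => measure_singleton (φ w)

theorem ProbabilityTheory.IndepFun.measure_mul_eq_eq_zero {𝕜 : Type*} [Field 𝕜]
    [MeasurableSpace 𝕜] [MeasurableEq 𝕜] [MeasurableDiv₂ 𝕜] [IsFiniteMeasure μ] {Z : Ω → 𝕜}
    (hind : IndepFun W Z μ) (hW : Measurable W) (hZ : Measurable Z)
    [NullSingletonClass (μ.map Z)] {a b : α → 𝕜} (ha : Measurable a) (hb : Measurable b)
    (ha_ne : ∀ᵐ ω ∂μ, a (W ω) ≠ 0) :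
    μ {ω | a (W ω) * Z ω = b (W ω)} = 0 := by
  have hsolve : μ {ω | Z ω = (fun w => b w / a w) (W ω)} = 0 :=
    hind.measure_eq_comp_eq_zero hW hZ (hb.div ha)
  refine measure_mono_null (fun ω hω => ?_) (measure_union_null (ae_iff.mp ha_ne) hsolve)
  by_cases h : a (W ω) = 0
  · exact Or.inl (not_not.mpr h)
  · exact Or.inr (eq_div_of_mul_eq h ((mul_comm _ _).trans hω))

end Independence

theorem Matrix.det_relay {R : Type*} [CommRing R] (V₁ V₂ : Matrix (Fin 3) (Fin 2) R)
    (x₀ x₁ x₂ x₃ x₄ x₅ x₆ x₇ : R) :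
    (!![x₀ * V₁ 0 0, x₀ * V₁ 0 1, x₃ * V₂ 0 0, x₃ * V₂ 0 1;
        x₁ * V₁ 1 0, x₁ * V₁ 1 1, x₄ * V₂ 1 0, x₄ * V₂ 1 1;
        x₂ * V₁ 2 0, x₂ * V₁ 2 1, x₅ * V₂ 2 0, x₅ * V₂ 2 1;
        x₆ * V₁ 2 0, x₆ * V₁ 2 1, x₇ * V₂ 2 0, x₇ * V₂ 2 1]).det
      = (x₂ * x₇ - x₅ * x₆) *
        ((Matrix.of ![V₁ 1, V₁ 2]).det * (Matrix.of ![V₂ 0, V₂ 2]).det * (x₁ * x₃)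
          - (Matrix.of ![V₁ 0, V₁ 2]).det * (Matrix.of ![V₂ 1, V₂ 2]).det * (x₀ * x₄)) := by
  simp [Matrix.det_succ_row_zero, Fin.sum_univ_succ, Fin.succAbove]
  ring

/-- The coefficients are `X 0, X 1, X 2 = H₁₁(1), H₁₁(2), H₁₁(3)`,
`X 3, X 4, X 5 = H₁₂(1), H₁₂(2), H₁₂(3)` and `X 6, X 7 = H₂₁(3), H₂₂(3)`. -/
theorem relay_decoding_matrix_invertible_ae_general
    {Ω : Type*} [MeasureSpace Ω] [IsProbabilityMeasure (ℙ : Measure Ω)]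
    (V₁ V₂ : Matrix (Fin 3) (Fin 2) ℂ)
    (hV₁ : ∀ i j : Fin 3, i ≠ j → (Matrix.of ![V₁ i, V₁ j]).det ≠ 0)
    (hV₂ : ∀ i j : Fin 3, i ≠ j → (Matrix.of ![V₂ i, V₂ j]).det ≠ 0)
    (X : Fin 8 → Ω → ℂ)
    (hmeas : ∀ k, Measurable (X k))
    (hindep : iIndepFun X ℙ)
    (hac : ∀ k, (Measure.map (X k) ℙ) ≪ (volume : Measure ℂ)) :
    ℙ {ω | (!![X 0 ω * V₁ 0 0, X 0 ω * V₁ 0 1, X 3 ω * V₂ 0 0, X 3 ω * V₂ 0 1;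
               X 1 ω * V₁ 1 0, X 1 ω * V₁ 1 1, X 4 ω * V₂ 1 0, X 4 ω * V₂ 1 1;
               X 2 ω * V₁ 2 0, X 2 ω * V₁ 2 1, X 5 ω * V₂ 2 0, X 5 ω * V₂ 2 1;
               X 6 ω * V₁ 2 0, X 6 ω * V₁ 2 1, X 7 ω * V₂ 2 0, X 7 ω * V₂ 2 1]).det
          = 0} = 0 := by
  have atomless k : NullSingletonClass (Measure.map (X k) ℙ) := (hac k).nullSingletonClass
  have ne_zero k : ∀ᵐ ω, X k ω ≠ 0 :=
    ae_of_ae_map (hmeas k).aemeasurable (Measure.ae_ne _ 0)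
  have triple {i j l} k (hik : i ≠ k) (hjk : j ≠ k) (hlk : l ≠ k) :=
    hindep.indepFun_triple hmeas hik hjk hlk
  have measurable_triple i j l : Measurable fun ω => (X i ω, X j ω, X l ω) := by fun_prop
  have hc : (Matrix.of ![V₁ 0, V₁ 2]).det * (Matrix.of ![V₂ 1, V₂ 2]).det ≠ 0 :=
    mul_ne_zero (hV₁ 0 2 (by decide)) (hV₂ 1 2 (by decide))
  set c := (Matrix.of ![V₁ 1, V₁ 2]).det * (Matrix.of ![V₂ 0, V₂ 2]).det /
    ((Matrix.of ![V₁ 0, V₁ 2]).det * (Matrix.of ![V₂ 1, V₂ 2]).det)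
  have factor₁_null : ℙ {ω | X 2 ω * X 7 ω = X 5 ω * X 6 ω} = 0 :=
    (triple 7 (by decide) (by decide) (by decide)).measure_mul_eq_eq_zero (measurable_triple 2 5 6)
      (hmeas 7) (a := Prod.fst) (b := fun p => p.2.1 * p.2.2) (by fun_prop) (by fun_prop)
      (ne_zero 2)
  have factor₂_null : ℙ {ω | X 0 ω * X 4 ω = c * (X 1 ω * X 3 ω)} = 0 :=
    (triple 4 (by decide) (by decide) (by decide)).measure_mul_eq_eq_zero (measurable_triple 0 1 3)
      (hmeas 4) (a := Prod.fst) (b := fun p => c * (p.2.1 * p.2.2)) (by fun_prop) (by fun_prop)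
      (ne_zero 0)
  simp only [Matrix.det_relay]
  refine measure_mono_null (fun ω hω => ?_) (measure_union_null factor₁_null factor₂_null)
  rcases mul_eq_zero.mp hω with h | h
  · exact Or.inl (sub_eq_zero.mp h)
  · refine Or.inr ?_
    rw [Set.mem_ofPred_eq, div_mul_eq_mul_div, eq_div_iff hc]
    linear_combination -h

/-- Decodability at relay 1. With X 0 = H₁₁(1), X 1 = H₁₁(2), X 2 = H₁₁(3),
X 3 = H₁₂(1), X 4 = H₁₂(2), X 5 = H₁₂(3), X 6 = H₂₁(3), X 7 = H₂₂(3) i.i.d.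
standard complex Gaussians, and V₁, V₂ ∈ ℂ^{3×2} fixed with nonzero entries and
all 2×2 row-submatrices invertible, the 4×4 matrix sending (u,v) to
(Y₁(1), Y₁(2), Y₁(3), Y₂(3)) is invertible with probability 1. -/
theorem relay_decoding_matrix_invertible_ae
    {Ω : Type*} [MeasureSpace Ω] [IsProbabilityMeasure (ℙ : Measure Ω)]
    (V₁ V₂ : Matrix (Fin 3) (Fin 2) ℂ)
    (hV₁e : ∀ i j, V₁ i j ≠ 0) (hV₂e : ∀ i j, V₂ i j ≠ 0)
    (hV₁ : ∀ i j : Fin 3, i ≠ j → (Matrix.of ![V₁ i, V₁ j]).det ≠ 0)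
    (hV₂ : ∀ i j : Fin 3, i ≠ j → (Matrix.of ![V₂ i, V₂ j]).det ≠ 0)
    (X : Fin 8 → Ω → ℂ)
    (hmeas : ∀ k, Measurable (X k))
    (hindep : iIndepFun X ℙ)
    (hac : ∀ k, (Measure.map (X k) ℙ) ≪ (volume : Measure ℂ)) :
    ℙ {ω | (!![X 0 ω * V₁ 0 0, X 0 ω * V₁ 0 1, X 3 ω * V₂ 0 0, X 3 ω * V₂ 0 1;
               X 1 ω * V₁ 1 0, X 1 ω * V₁ 1 1, X 4 ω * V₂ 1 0, X 4 ω * V₂ 1 1;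
               X 2 ω * V₁ 2 0, X 2 ω * V₁ 2 1, X 5 ω * V₂ 2 0, X 5 ω * V₂ 2 1;
               X 6 ω * V₁ 2 0, X 6 ω * V₁ 2 1, X 7 ω * V₂ 2 0, X 7 ω * V₂ 2 1]).det
          = 0} = 0 :=
  relay_decoding_matrix_invertible_ae_general V₁ V₂ hV₁ hV₂ X hmeas hindep hac
end

section
/- The 4×4 decoding matrix determinant in the limited-Shannon-feedback scheme is a nonzero polynomial in the channel variables: for fixed V₁, V₂ ∈ ℂ^{3×2} with all 2×2 row-submatrices invertible, the determinant of the matrix with rows (h₁V₁₁, h₂V₂₁), (h₃V₁₂, h₄V₂₂), (h₅V₁₃, h₆V₂₃), (h₇V₁₃, h₈V₂₃), viewed as a polynomial in h₁,…,h₈, is not identically zero. -/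
/-!
At the channel point h = (1, 0, 0, 1, 1, 0, 0, 1) the decoding matrix has rows
(V₁₁ | 0), (0 | V₂₂), (V₁₃ | 0), (0 | V₂₃); after swapping the middle rows it is block diagonal,
so its determinant is -det[V₁₁; V₁₃] · det[V₂₂; V₂₃] ≠ 0.
-/

open MvPolynomial

theorem Matrix.det_interleaved_blockDiagonal {R : Type*} [CommRing R]
    (A B : Matrix (Fin 2) (Fin 2) R) :
    !![A 0 0, A 0 1, 0, 0; 0, 0, B 0 0, B 0 1; A 1 0, A 1 1, 0, 0; 0, 0, B 1 0, B 1 1].det =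
      -(A.det * B.det) := by
  simp [Matrix.det_succ_row_zero, Fin.sum_univ_succ, Fin.succAbove]
  ring

theorem decoding_det_poly_ne_zero_general
    (V₁ V₂ : Matrix (Fin 3) (Fin 2) ℂ)
    (hV₁ : ∀ i j : Fin 3, i ≠ j → (Matrix.of ![V₁ i, V₁ j]).det ≠ 0)
    (hV₂ : ∀ i j : Fin 3, i ≠ j → (Matrix.of ![V₂ i, V₂ j]).det ≠ 0) :
    (!![(X 0 : MvPolynomial (Fin 8) ℂ) * C (V₁ 0 0), X 0 * C (V₁ 0 1),
          X 1 * C (V₂ 0 0), X 1 * C (V₂ 0 1);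
        X 2 * C (V₁ 1 0), X 2 * C (V₁ 1 1), X 3 * C (V₂ 1 0), X 3 * C (V₂ 1 1);
        X 4 * C (V₁ 2 0), X 4 * C (V₁ 2 1), X 5 * C (V₂ 2 0), X 5 * C (V₂ 2 1);
        X 6 * C (V₁ 2 0), X 6 * C (V₁ 2 1), X 7 * C (V₂ 2 0), X 7 * C (V₂ 2 1)]).det
      ≠ 0 := by
  refine ne_zero_of_map (f := eval ![1, 0, 0, 1, 1, 0, 0, 1]) ?_
  have hA := hV₁ 0 2 (by decide)
  have hB := hV₂ 1 2 (by decide)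
  rw [RingHom.map_det]
  calc _ = -((Matrix.of ![V₁ 0, V₁ 2]).det * (Matrix.of ![V₂ 1, V₂ 2]).det) := by
        rw [← Matrix.det_interleaved_blockDiagonal]
        congr 1
        ext i j
        fin_cases i <;> fin_cases j <;> simp
    _ ≠ 0 := neg_ne_zero.2 (mul_ne_zero hA hB)

/-- The determinant of the 4×4 decoding matrix in the limited-Shannon-feedback
scheme, viewed as a polynomial in the eight channel variables h₁,…,h₈, is not
identically zero, whenever V₁, V₂ ∈ ℂ^{3×2} have nonzero entries and all their
2×2 row-submatrices are invertible. -/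
theorem decoding_det_poly_ne_zero
    (V₁ V₂ : Matrix (Fin 3) (Fin 2) ℂ)
    (hV₁e : ∀ i j, V₁ i j ≠ 0) (hV₂e : ∀ i j, V₂ i j ≠ 0)
    (hV₁ : ∀ i j : Fin 3, i ≠ j → (Matrix.of ![V₁ i, V₁ j]).det ≠ 0)
    (hV₂ : ∀ i j : Fin 3, i ≠ j → (Matrix.of ![V₂ i, V₂ j]).det ≠ 0) :
    (!![(X 0 : MvPolynomial (Fin 8) ℂ) * C (V₁ 0 0), X 0 * C (V₁ 0 1),
          X 1 * C (V₂ 0 0), X 1 * C (V₂ 0 1);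
        X 2 * C (V₁ 1 0), X 2 * C (V₁ 1 1), X 3 * C (V₂ 1 0), X 3 * C (V₂ 1 1);
        X 4 * C (V₁ 2 0), X 4 * C (V₁ 2 1), X 5 * C (V₂ 2 0), X 5 * C (V₂ 2 1);
        X 6 * C (V₁ 2 0), X 6 * C (V₁ 2 1), X 7 * C (V₂ 2 0), X 7 * C (V₂ 2 1)]).det
      ≠ 0 :=
  decoding_det_poly_ne_zero_general V₁ V₂ hV₁ hV₂
end
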